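/- arXiv:2207.05529 — 5 statements merged into one kernel-verified Lean document; each statement's English description precedes it below -/
import Mathlib

section
/- There exists an abstract parity distribution on the faces of the equilateral-triangle tessellation of the plane that is not the parity distribution of any abstract root distribution. Concretely: there exists a function P assigning to every face (every U(p) and every D(p), p ∈ ℤ²) a value in {0,1} such that for every abstract root distribution δ : ℤ² → Fin 3 there is at least one face whose parity under δ differs from its value under P. -/
def dirVec : Fin 3 → ℤ × ℤ := ![(1, 0), (0, 1), (-1, 1)]

def parityU (δ : ℤ × ℤ → Fin 3) (p : ℤ × ℤ) : ZMod 2 :=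
  (if δ p ≠ 2 then 1 else 0) + (if δ (p.1 + 1, p.2) ≠ 1 then 1 else 0) +
    (if δ (p.1, p.2 + 1) ≠ 0 then 1 else 0)

def parityD (δ : ℤ × ℤ → Fin 3) (p : ℤ × ℤ) : ZMod 2 :=
  (if δ (p.1 + 1, p.2) ≠ 0 then 1 else 0) + (if δ (p.1, p.2 + 1) ≠ 1 then 1 else 0) +
    (if δ (p.1 + 1, p.2 + 1) ≠ 2 then 1 else 0)

/-- reduce an integer to `Fin 9` -/
def red9 (x : ℤ) : Fin 9 := ⟨x.toNat % 9, Nat.mod_lt _ (by norm_num)⟩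

lemma red9_coe (i : Fin 9) : red9 (i : ℤ) = i := by
  apply Fin.ext
  simp [red9, Nat.mod_eq_of_lt i.isLt]

/-- There exists an abstract parity distribution (an assignment of a parity in
`ZMod 2` to every face `U(p)` — coded `(p, true)` — and every face `D(p)` —
coded `(p, false)`) which is not the parity distribution of any abstract root
distribution `δ : ℤ × ℤ → Fin 3`. -/
theorem exists_parity_distribution_not_realized_by_root_distribution :
    ∃ P : (ℤ × ℤ) × Bool → ZMod 2,
      ∀ δ : ℤ × ℤ → Fin 3,
        ∃ p : ℤ × ℤ, parityU δ p ≠ P (p, true) ∨ parityD δ p ≠ P (p, false) := by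
  by_contra h
  push_neg at h
  -- for every pattern on the 9×9 block of faces there is a realizing δ
  have key : ∀ Q : (Fin 9 × Fin 9) × Bool → ZMod 2, ∃ δ : ℤ × ℤ → Fin 3,
      ∀ i j : Fin 9, parityU δ ((i : ℤ), (j : ℤ)) = Q ((i, j), true) ∧
        parityD δ ((i : ℤ), (j : ℤ)) = Q ((i, j), false) := by
    intro Q
    obtain ⟨δ, hδ⟩ := h (fun q => Q ((red9 q.1.1, red9 q.1.2), q.2))
    refine ⟨δ, fun i j => ?_⟩
    have := hδ ((i : ℤ), (j : ℤ))
    simpa [red9_coe] using this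
  choose δQ hδQ using key
  -- injection from patterns into vertex assignments on the 10×10 block
  have hinj : Function.Injective
      (fun Q : (Fin 9 × Fin 9) × Bool → ZMod 2 =>
        (fun v : Fin 10 × Fin 10 => δQ Q ((v.1 : ℤ), (v.2 : ℤ)))) := by
    intro Q1 Q2 hQ
    have hv : ∀ v : Fin 10 × Fin 10, δQ Q1 ((v.1 : ℤ), (v.2 : ℤ)) = δQ Q2 ((v.1 : ℤ), (v.2 : ℤ)) :=
      fun v => congrFun hQ v
    have hvij : ∀ i j : Fin 10, δQ Q1 ((i : ℤ), (j : ℤ)) = δQ Q2 ((i : ℤ), (j : ℤ)) :=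
      fun i j => hv (i, j)
    funext q
    obtain ⟨⟨i, j⟩, b⟩ := q
    have e1 : ((i : ℤ), (j : ℤ)) = (((i.castSucc : Fin 10) : ℤ), ((j.castSucc : Fin 10) : ℤ)) := by
      simp
    have e2 : ((i : ℤ) + 1, (j : ℤ)) = (((i.succ : Fin 10) : ℤ), ((j.castSucc : Fin 10) : ℤ)) := by
      simp
    have e3 : ((i : ℤ), (j : ℤ) + 1) = (((i.castSucc : Fin 10) : ℤ), ((j.succ : Fin 10) : ℤ)) := by
      simp
    have e4 : ((i : ℤ) + 1, (j : ℤ) + 1) = (((i.succ : Fin 10) : ℤ), ((j.succ : Fin 10) : ℤ)) := by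
      simp
    have h1 : δQ Q1 ((i : ℤ), (j : ℤ)) = δQ Q2 ((i : ℤ), (j : ℤ)) := by
      rw [e1]; exact hvij _ _
    have h2 : δQ Q1 ((i : ℤ) + 1, (j : ℤ)) = δQ Q2 ((i : ℤ) + 1, (j : ℤ)) := by
      rw [e2]; exact hvij _ _
    have h3 : δQ Q1 ((i : ℤ), (j : ℤ) + 1) = δQ Q2 ((i : ℤ), (j : ℤ) + 1) := by
      rw [e3]; exact hvij _ _
    have h4 : δQ Q1 ((i : ℤ) + 1, (j : ℤ) + 1) = δQ Q2 ((i : ℤ) + 1, (j : ℤ) + 1) := by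
      rw [e4]; exact hvij _ _
    have hU : parityU (δQ Q1) ((i : ℤ), (j : ℤ)) = parityU (δQ Q2) ((i : ℤ), (j : ℤ)) := by
      simp only [parityU, h1, h2, h3]
    have hD : parityD (δQ Q1) ((i : ℤ), (j : ℤ)) = parityD (δQ Q2) ((i : ℤ), (j : ℤ)) := by
      simp only [parityD, h2, h3, h4]
    cases b
    · rw [← (hδQ Q1 i j).2, ← (hδQ Q2 i j).2, hD]
    · rw [← (hδQ Q1 i j).1, ← (hδQ Q2 i j).1, hU]
  have hcard := Fintype.card_le_of_injective _ hinj
  simp only [Fintype.card_fun, Fintype.card_prod, Fintype.card_bool, Fintype.card_fin,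
    ZMod.card] at hcard
  norm_num at hcard
end

section
/- Every parity distribution on a ball of radius 1 (a hexagon) can be realized by an abstract root distribution. Concretely: for every assignment of a value in {0,1} to each of the six faces of the tessellation containing the origin — namely U(0,0), U(−1,0), U(0,−1), D(−1,0), D(0,−1), D(−1,−1) — there exists an abstract root distribution δ : ℤ² → Fin 3 such that the parity of each of these six faces under δ equals its assigned value. -/
/-- An explicit root distribution realizing prescribed parities on the six
faces of the radius-one hexagon. -/
def myDelta (pU₀ pU₁ pU₂ pD₀ pD₁ pD₂ : ZMod 2) : ℤ × ℤ → Fin 3 := fun q =>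
  -- adjusted targets (center contribution removed)
  let tU0 := pU₀
  let tU1 := pU₁ + 1
  let tU2 := pU₂ + 1
  let tD0 := pD₀ + 1
  let tD1 := pD₁ + 1
  let tD2 := pD₂
  let c : ZMod 2 := if tU1 = 1 ∧ tD0 = 1 then 1 else 0
  let a1 := tU0 + c
  let a2 := tD1 + 1
  let a3 := tU2 + 1
  let a4 := tD2 + 1
  let a5 := tU1 + 1
  let a6 : ZMod 2 := if c = 1 then tD0 + 1 else 1
  let b5 := tD0 + a6
  let b6 := c
  if q = (0, 0) then 2
  else if q = (1, 0) then (if a1 = 0 then 1 else 0)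
  else if q = (1, -1) then (if a2 = 0 then 0 else 2)
  else if q = (0, -1) then (if a3 = 0 then 2 else 1)
  else if q = (-1, 0) then (if a4 = 0 then 1 else 0)
  else if q = (-1, 1) then (if a5 = 0 then 0 else if b5 = 0 then 1 else 2)
  else if q = (0, 1) then (if a6 = 0 then 2 else if b6 = 0 then 0 else 1)
  else 0

/-- Every parity distribution on the hexagon of radius 1 around the origin
(its six faces are `U(0,0)`, `U(-1,0)`, `U(0,-1)`, `D(-1,0)`, `D(0,-1)`,
`D(-1,-1)`) can be realized by an abstract root distribution. -/
theorem parity_on_radius_one_ball_realizable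
    (pU₀ pU₁ pU₂ pD₀ pD₁ pD₂ : ZMod 2) :
    ∃ δ : ℤ × ℤ → Fin 3,
      parityU δ (0, 0) = pU₀ ∧ parityU δ (-1, 0) = pU₁ ∧ parityU δ (0, -1) = pU₂ ∧
      parityD δ (-1, 0) = pD₀ ∧ parityD δ (0, -1) = pD₁ ∧ parityD δ (-1, -1) = pD₂ := by
  refine ⟨myDelta pU₀ pU₁ pU₂ pD₀ pD₁ pD₂, ?_⟩
  revert pU₀ pU₁ pU₂ pD₀ pD₁ pD₂
  decide
end

section
/- Every parity distribution on a bi-infinite strip of height 1 can be realized by an abstract root distribution. Concretely: for every function p : ℤ × Bool → {0,1} there exists an abstract root distribution δ : ℤ² → Fin 3 such that for every n ∈ ℤ the parity of the upward face U(n,0) under δ equals p(n, true) and the parity of the downward face D(n,0) under δ equals p(n, false). -/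
/-- Forward step: from the state (δ at `(n,0)`, δ at `(n,1)`) and the desired
parities of `U(n,0)` and `D(n,0)`, produce the state at column `n+1`. -/
def stepF (s : Fin 3 × Fin 3) (q : ZMod 2 × ZMod 2) : Fin 3 × Fin 3 :=
  let a' : Fin 3 :=
    if q.1 + (if s.1 ≠ 2 then 1 else 0) + (if s.2 ≠ 0 then 1 else 0) = (0 : ZMod 2)
    then 1 else 0
  let b' : Fin 3 :=
    if q.2 + (if a' ≠ 0 then 1 else 0) + (if s.2 ≠ 1 then 1 else 0) = (0 : ZMod 2)
    then 2 else 0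
  (a', b')

/-- Backward step: from the state at column `n+1` and the desired parities of
`U(n,0)` and `D(n,0)`, produce a state at column `n`. -/
def stepB (s' : Fin 3 × Fin 3) (q : ZMod 2 × ZMod 2) : Fin 3 × Fin 3 :=
  let b : Fin 3 :=
    if q.2 + (if s'.1 ≠ 0 then 1 else 0) + (if s'.2 ≠ 2 then 1 else 0) = (0 : ZMod 2)
    then 1 else 0
  let a : Fin 3 :=
    if q.1 + (if s'.1 ≠ 1 then 1 else 0) + (if b ≠ 0 then 1 else 0) = (0 : ZMod 2)
    then 2 else 0
  (a, b)

lemma stepF_spec (s : Fin 3 × Fin 3) (q : ZMod 2 × ZMod 2) :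
    ((if s.1 ≠ 2 then 1 else 0) + (if (stepF s q).1 ≠ 1 then 1 else 0) +
        (if s.2 ≠ 0 then 1 else 0) = q.1) ∧
    ((if (stepF s q).1 ≠ 0 then 1 else 0) + (if s.2 ≠ 1 then 1 else 0) +
        (if (stepF s q).2 ≠ 2 then 1 else 0) = q.2) := by
  revert s q; decide

lemma stepB_spec (s' : Fin 3 × Fin 3) (q : ZMod 2 × ZMod 2) :
    ((if (stepB s' q).1 ≠ 2 then 1 else 0) + (if s'.1 ≠ 1 then 1 else 0) +
        (if (stepB s' q).2 ≠ 0 then 1 else 0) = q.1) ∧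
    ((if s'.1 ≠ 0 then 1 else 0) + (if (stepB s' q).2 ≠ 1 then 1 else 0) +
        (if s'.2 ≠ 2 then 1 else 0) = q.2) := by
  revert s' q; decide

/-- Forward states: `fwd p n` is the state at column `n` for `n ≥ 0`. -/
def fwd (p : ℤ × Bool → ZMod 2) : ℕ → Fin 3 × Fin 3
  | 0 => (0, 0)
  | n + 1 => stepF (fwd p n) (p ((n : ℤ), true), p ((n : ℤ), false))

/-- Backward states: `bwd p k` is the state at column `-k`. -/
def bwd (p : ℤ × Bool → ZMod 2) : ℕ → Fin 3 × Fin 3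
  | 0 => (0, 0)
  | k + 1 => stepB (bwd p k) (p (-(k + 1 : ℤ), true), p (-(k + 1 : ℤ), false))

/-- The state at an arbitrary column `n : ℤ`. -/
def state (p : ℤ × Bool → ZMod 2) (n : ℤ) : Fin 3 × Fin 3 :=
  if 0 ≤ n then fwd p n.toNat else bwd p (-n).toNat

lemma state_succ_of_nonneg (p : ℤ × Bool → ZMod 2) {n : ℤ} (hn : 0 ≤ n) :
    state p (n + 1) = stepF (state p n) (p (n, true), p (n, false)) := by
  have h1 : (0 : ℤ) ≤ n + 1 := by omega
  have h2 : (n + 1).toNat = n.toNat + 1 := by omega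
  simp only [state, if_pos hn, if_pos h1, h2, fwd]
  rw [Int.toNat_of_nonneg hn]

lemma state_of_neg (p : ℤ × Bool → ZMod 2) {n : ℤ} (hn : n < 0) :
    state p n = stepB (state p (n + 1)) (p (n, true), p (n, false)) := by
  have h2 : (-n).toNat = (-(n + 1)).toNat + 1 := by omega
  have hs : state p (n + 1) = bwd p (-(n + 1)).toNat := by
    by_cases h : 0 ≤ n + 1
    · have hn1 : n + 1 = 0 := by omega
      simp [state, hn1, fwd, bwd]
    · simp [state, h]
  rw [hs]
  have : state p n = bwd p ((-(n + 1)).toNat + 1) := by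
    simp [state, not_le.mpr hn, h2]
  have hk : -(((-(n + 1)).toNat : ℤ) + 1) = n := by omega
  rw [this, bwd, hk]

/-- Every parity distribution on the bi-infinite strip of height 1 formed by
the faces `U(n,0)` and `D(n,0)`, `n ∈ ℤ`, can be realized by an abstract root
distribution. -/
theorem parity_on_strip_realizable (p : ℤ × Bool → ZMod 2) :
    ∃ δ : ℤ × ℤ → Fin 3,
      ∀ n : ℤ, parityU δ (n, 0) = p (n, true) ∧ parityD δ (n, 0) = p (n, false) := by
  refine ⟨fun q => if q.2 = 0 then (state p q.1).1 else (state p q.1).2, fun n => ?_⟩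
  by_cases hn : 0 ≤ n
  · have h := state_succ_of_nonneg p hn
    have hF := stepF_spec (state p n) (p (n, true), p (n, false))
    constructor
    · have := hF.1
      simpa [parityU, h] using this
    · have := hF.2
      simpa [parityD, h] using this
  · have h := state_of_neg p (by omega : n < 0)
    have hB := stepB_spec (state p (n + 1)) (p (n, true), p (n, false))
    constructor
    · have := hB.1
      simpa [parityU, h] using this
    · have := hB.2
      simpa [parityD, h] using this
end

section
/- Classification of the even root distributions of strip type (the infinite family in the classification of even root distributions): let d ∈ Fin 3 and let δ : ℤ² → Fin 3 be an abstract root distribution with δ(x) ≠ d for every x ∈ ℤ² (so that every lattice line in direction d is a geodesic of rank 2). Then δ is even if and only if δ is constant along every lattice line in direction d, i.e., δ(x + v_d) = δ(x) for all x ∈ ℤ², where v₀ = (1,0), v₁ = (0,1), v₂ = (−1,1). (Such δ are exactly unions of minimal strips of height 1 with rank-2 boundaries.) -/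
lemma lU0 (a b c : Fin 3) (ha : a ≠ 0) (hb : b ≠ 0) (hc : c ≠ 0) :
    ((if a ≠ 2 then (1:ZMod 2) else 0) + (if b ≠ 1 then 1 else 0) +
      (if c ≠ 0 then 1 else 0) = 0) ↔ b = a := by revert ha hb hc; revert a b c; decide

lemma lD0 (b c e : Fin 3) (hb : b ≠ 0) (hc : c ≠ 0) (he : e ≠ 0) :
    ((if b ≠ 0 then (1:ZMod 2) else 0) + (if c ≠ 1 then 1 else 0) +
      (if e ≠ 2 then 1 else 0) = 0) ↔ e = c := by revert hb hc he; revert b c e; decide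

lemma lU1 (a b c : Fin 3) (ha : a ≠ 1) (hb : b ≠ 1) (hc : c ≠ 1) :
    ((if a ≠ 2 then (1:ZMod 2) else 0) + (if b ≠ 1 then 1 else 0) +
      (if c ≠ 0 then 1 else 0) = 0) ↔ c = a := by revert ha hb hc; revert a b c; decide

lemma lD1 (b c e : Fin 3) (hb : b ≠ 1) (hc : c ≠ 1) (he : e ≠ 1) :
    ((if b ≠ 0 then (1:ZMod 2) else 0) + (if c ≠ 1 then 1 else 0) +
      (if e ≠ 2 then 1 else 0) = 0) ↔ e = b := by revert hb hc he; revert b c e; decide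

lemma lU2 (a b c : Fin 3) (ha : a ≠ 2) (hb : b ≠ 2) (hc : c ≠ 2) :
    ((if a ≠ 2 then (1:ZMod 2) else 0) + (if b ≠ 1 then 1 else 0) +
      (if c ≠ 0 then 1 else 0) = 0) ↔ c = b := by revert ha hb hc; revert a b c; decide

lemma lD2 (b c e : Fin 3) (hb : b ≠ 2) (hc : c ≠ 2) (he : e ≠ 2) :
    ((if b ≠ 0 then (1:ZMod 2) else 0) + (if c ≠ 1 then 1 else 0) +
      (if e ≠ 2 then 1 else 0) = 0) ↔ c = b := by revert hb hc he; revert b c e; decide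

lemma padd (p : ℤ × ℤ) (a b : ℤ) : p + (a, b) = (p.1 + a, p.2 + b) := rfl

/-- Classification of even root distributions of strip type: if `δ` never takes
the value `d` (so every lattice line in direction `d` is a rank-2 geodesic),
then `δ` is even if and only if `δ` is invariant under translation by `v_d`. -/
theorem even_iff_invariant_of_rank_two_direction (d : Fin 3)
    (δ : ℤ × ℤ → Fin 3) (hδ : ∀ x : ℤ × ℤ, δ x ≠ d) :
    (∀ p : ℤ × ℤ, parityU δ p = 0 ∧ parityD δ p = 0) ↔
      ∀ x : ℤ × ℤ, δ (x + dirVec d) = δ x := by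
  have hd3 : d = 0 ∨ d = 1 ∨ d = 2 := by fin_cases d <;> simp
  rcases hd3 with rfl | rfl | rfl
  · constructor
    · intro h x
      have h1 := (h x).1
      rw [parityU, lU0 _ _ _ (hδ _) (hδ _) (hδ _)] at h1
      have hx : x + dirVec 0 = (x.1 + 1, x.2) := by
        simp [dirVec, Prod.ext_iff]
      rw [hx, h1]
    · intro h p
      have e1 : δ (p.1 + 1, p.2) = δ p := by
        have := h p
        simpa [dirVec, padd] using this
      have e2 : δ (p.1 + 1, p.2 + 1) = δ (p.1, p.2 + 1) := by
        have := h (p.1, p.2 + 1)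
        simpa [dirVec, padd] using this
      exact ⟨by rw [parityU, lU0 _ _ _ (hδ _) (hδ _) (hδ _)]; exact e1,
             by rw [parityD, lD0 _ _ _ (hδ _) (hδ _) (hδ _)]; exact e2⟩
  · constructor
    · intro h x
      have h1 := (h x).1
      rw [parityU, lU1 _ _ _ (hδ _) (hδ _) (hδ _)] at h1
      have hx : x + dirVec 1 = (x.1, x.2 + 1) := by
        simp [dirVec, Prod.ext_iff]
      rw [hx, h1]
    · intro h p
      have e1 : δ (p.1, p.2 + 1) = δ p := by
        have := h p
        simpa [dirVec, padd] using this
      have e2 : δ (p.1 + 1, p.2 + 1) = δ (p.1 + 1, p.2) := by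
        have := h (p.1 + 1, p.2)
        simpa [dirVec, padd] using this
      exact ⟨by rw [parityU, lU1 _ _ _ (hδ _) (hδ _) (hδ _)]; exact e1,
             by rw [parityD, lD1 _ _ _ (hδ _) (hδ _) (hδ _)]; exact e2⟩
  · constructor
    · intro h x
      have h1 := (h (x.1 - 1, x.2)).1
      rw [parityU, lU2 _ _ _ (hδ _) (hδ _) (hδ _)] at h1
      simp only [sub_add_cancel] at h1
      have hx : x + dirVec 2 = (x.1 - 1, x.2 + 1) := by
        simp [dirVec, Prod.ext_iff]; ring
      rw [hx, h1]
    · intro h p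
      have e1 : δ (p.1, p.2 + 1) = δ (p.1 + 1, p.2) := by
        have := h (p.1 + 1, p.2)
        have hx : ((p.1 + 1 : ℤ), p.2) + dirVec 2 = (p.1, p.2 + 1) := by
          simp [dirVec, Prod.ext_iff]
        rwa [hx] at this
      exact ⟨by rw [parityU, lU2 _ _ _ (hδ _) (hδ _) (hδ _)]; exact e1,
             by rw [parityD, lD2 _ _ _ (hδ _) (hδ _) (hδ _)]; exact e1⟩
end

section
/- Consequence of the classification of even root distributions: let δ : ℤ² → Fin 3 be an even abstract root distribution and d ∈ Fin 3. If there exist two distinct lattice lines in direction d on which δ never takes the value d (two parallel geodesics of rank 2 in direction d), then δ(x) ≠ d for every x ∈ ℤ², and moreover δ(x + v_d) = δ(x) for all x ∈ ℤ² (δ is a union of minimal strips of height 1 and rank 2 parallel to d). -/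
def IsEven (δ : ℤ × ℤ → Fin 3) : Prop :=
  ∀ p : ℤ × ℤ, parityU δ p = 0 ∧ parityD δ p = 0

def IsRankTwoGeodesic (δ : ℤ × ℤ → Fin 3) (d : Fin 3) (x₀ : ℤ × ℤ) : Prop :=
  ∀ n : ℤ, δ (x₀ + n • dirVec d) ≠ d

def RowClean (δ : ℤ × ℤ → Fin 3) (y : ℤ) : Prop := ∀ a : ℤ, δ (a, y) ≠ 0

def RowConst (δ : ℤ × ℤ → Fin 3) (y : ℤ) : Prop := ∀ a : ℤ, δ (a + 1, y) = δ (a, y)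

def HasZeroOne (δ : ℤ × ℤ → Fin 3) (y : ℤ) : Prop :=
  ∃ a : ℤ, δ (a, y) = 0 ∧ δ (a + 1, y) = 1

namespace IsEven

variable {δ : ℤ × ℤ → Fin 3} (hδ : IsEven δ)
include hδ

section Faces

variable (a y : ℤ)

theorem right_eq_one_of_eq_zero (h : δ (a, y) = 0) (hup : δ (a, y + 1) ≠ 0) :
    δ (a + 1, y) = 1 := by
  have hU := (hδ (a, y)).1
  simp only [parityU, h] at hU
  revert hU hup
  generalize δ (a + 1, y) = u
  generalize δ (a, y + 1) = v
  revert u v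
  decide

theorem right_eq_zero_of_up_eq_zero_of_up_right_eq_one (h₀ : δ (a, y + 1) = 0)
    (h₁ : δ (a + 1, y + 1) = 1) : δ (a + 1, y) = 0 := by
  have hD := (hδ (a, y)).2
  simp only [parityD, h₀, h₁] at hD
  revert hD
  generalize δ (a + 1, y) = u
  revert u
  decide

theorem right_eq_iff_up_ne_zero (h : δ (a, y) ≠ 0) (hright : δ (a + 1, y) ≠ 0) :
    δ (a + 1, y) = δ (a, y) ↔ δ (a, y + 1) ≠ 0 := by
  have hU := (hδ (a, y)).1
  simp only [parityU] at hU
  revert hU h hright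
  generalize δ (a, y) = u
  generalize δ (a + 1, y) = v
  generalize δ (a, y + 1) = w
  revert u v w
  decide

theorem up_right_eq_iff_right_ne_zero (hup : δ (a, y + 1) ≠ 0)
    (hupright : δ (a + 1, y + 1) ≠ 0) :
    δ (a + 1, y + 1) = δ (a, y + 1) ↔ δ (a + 1, y) ≠ 0 := by
  have hD := (hδ (a, y)).2
  simp only [parityD] at hD
  revert hD hup hupright
  generalize δ (a + 1, y) = u
  generalize δ (a, y + 1) = v
  generalize δ (a + 1, y + 1) = w
  revert u v w
  decide

end Faces

section Rows

variable {y y₁ y₂ : ℤ}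

theorem hasZeroOne_of_succ (h : HasZeroOne δ (y + 1)) : HasZeroOne δ y := by
  obtain ⟨a, h₀, h₁⟩ := h
  have hright := hδ.right_eq_zero_of_up_eq_zero_of_up_right_eq_one a y h₀ h₁
  exact ⟨a + 1, hright, hδ.right_eq_one_of_eq_zero (a + 1) y hright (by rw [h₁]; decide)⟩

theorem hasZeroOne_of_le (hle : y₁ ≤ y₂) (h : HasZeroOne δ y₂) : HasZeroOne δ y₁ := by
  induction y₁, hle using Int.leInductionDown with
  | base => exact h
  | pred n _ ih => exact hδ.hasZeroOne_of_succ (by rwa [sub_add_cancel])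

theorem hasZeroOne_of_not_rowClean (hup : RowClean δ (y + 1)) (h : ¬RowClean δ y) :
    HasZeroOne δ y := by
  obtain ⟨a, ha⟩ : ∃ a, δ (a, y) = 0 := by simpa [RowClean] using h
  exact ⟨a, ha, hδ.right_eq_one_of_eq_zero a y ha (hup a)⟩

/-- A zero in a row spawns a pattern `0 1` that travels down-right diagonally, so it
cannot sit above a clean row. -/
theorem rowClean_of_rowClean_succ (h₁ : RowClean δ y₁) (hle : y₁ ≤ y₂)
    (hup : RowClean δ (y₂ + 1)) : RowClean δ y₂ := by
  by_contra h
  obtain ⟨a, ha, -⟩ := hδ.hasZeroOne_of_le hle (hδ.hasZeroOne_of_not_rowClean hup h)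
  exact h₁ a ha

theorem rowClean_succ_of_lt (h₁ : RowClean δ y₁) (h₂ : RowClean δ y₂) (hlt : y₁ < y₂) :
    RowClean δ (y₁ + 1) := by
  induction y₂, (hlt : y₁ + 1 ≤ y₂) using Int.leInduction with
  | base => exact h₂
  | succ n hn ih => exact ih (hδ.rowClean_of_rowClean_succ h₁ (by omega) h₂)

theorem rowConst_iff_rowClean_succ (h : RowClean δ y) :
    RowConst δ y ↔ RowClean δ (y + 1) :=
  forall_congr' fun a => hδ.right_eq_iff_up_ne_zero a y (h a) (h (a + 1))

theorem rowConst_succ_iff_rowClean (h : RowClean δ (y + 1)) :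
    RowConst δ (y + 1) ↔ RowClean δ y := by
  have hrow : RowConst δ (y + 1) ↔ ∀ a, δ (a + 1, y) ≠ 0 :=
    forall_congr' fun a => hδ.up_right_eq_iff_right_ne_zero a y (h a) (h (a + 1))
  refine hrow.trans ⟨fun h' a => ?_, fun h' a => h' _⟩
  simpa using h' (a - 1)

theorem rowClean_and_rowConst_succ_iff :
    RowClean δ (y + 1) ∧ RowConst δ (y + 1) ↔ RowClean δ y ∧ RowConst δ y := by
  constructor
  · rintro ⟨hup, hconst⟩
    have h := (hδ.rowConst_succ_iff_rowClean hup).1 hconst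
    exact ⟨h, (hδ.rowConst_iff_rowClean_succ h).2 hup⟩
  · rintro ⟨h, hconst⟩
    have hup := (hδ.rowConst_iff_rowClean_succ h).1 hconst
    exact ⟨hup, (hδ.rowConst_succ_iff_rowClean hup).2 h⟩

theorem rowClean_and_rowConst_of_two_rowClean (h₁ : RowClean δ y₁) (h₂ : RowClean δ y₂)
    (hne : y₁ ≠ y₂) (y : ℤ) : RowClean δ y ∧ RowConst δ y := by
  wlog hlt : y₁ < y₂ generalizing y₁ y₂
  · exact this h₂ h₁ hne.symm (hne.symm.lt_of_le (not_lt.1 hlt))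
  have hbase : RowClean δ y₁ ∧ RowConst δ y₁ :=
    ⟨h₁, (hδ.rowConst_iff_rowClean_succ h₁).2 (hδ.rowClean_succ_of_lt h₁ h₂ hlt)⟩
  induction y using Int.inductionOn' (b := y₁) with
  | zero => exact hbase
  | succ k _ ih => exact hδ.rowClean_and_rowConst_succ_iff.2 ih
  | pred k _ ih => exact hδ.rowClean_and_rowConst_succ_iff.1 (by rwa [sub_add_cancel])

end Rows

end IsEven

def TwoParallelGeodesicsRigid (d : Fin 3) : Prop :=
  ∀ δ : ℤ × ℤ → Fin 3, IsEven δ → ∀ x₀ y₀ : ℤ × ℤ,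
    IsRankTwoGeodesic δ d x₀ → IsRankTwoGeodesic δ d y₀ →
    (¬ ∃ n : ℤ, y₀ = x₀ + n • dirVec d) → (∀ x, δ x ≠ d) ∧ Function.Periodic δ (dirVec d)

theorem add_zsmul_dirVec_zero (x : ℤ × ℤ) (n : ℤ) : x + n • dirVec 0 = (x.1 + n, x.2) := by
  ext <;> simp [dirVec]

theorem isRankTwoGeodesic_zero_iff {δ : ℤ × ℤ → Fin 3} {x : ℤ × ℤ} :
    IsRankTwoGeodesic δ 0 x ↔ RowClean δ x.2 := by
  refine ⟨fun h a => ?_, fun h n => ?_⟩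
  · have := h (a - x.1)
    rwa [add_zsmul_dirVec_zero, add_sub_cancel] at this
  · rw [add_zsmul_dirVec_zero]
    exact h (x.1 + n)

theorem twoParallelGeodesicsRigid_zero : TwoParallelGeodesicsRigid 0 := by
  intro δ hδ x₀ y₀ hx hy hdist
  have hne : x₀.2 ≠ y₀.2 := fun h => hdist ⟨y₀.1 - x₀.1, by ext <;> simp [dirVec, h]⟩
  have hrows := hδ.rowClean_and_rowConst_of_two_rowClean (isRankTwoGeodesic_zero_iff.1 hx)
    (isRankTwoGeodesic_zero_iff.1 hy) hne
  refine ⟨fun x => (hrows x.2).1 x.1, fun x => ?_⟩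
  simpa [← add_zsmul_dirVec_zero] using (hrows x.2).2 x.1

/-- Rotation by `-60°`: `v₁ ↦ v₀`, `v₂ ↦ v₁`, `v₀ ↦ -v₂`; it maps upward faces to downward
faces and vice versa. -/
def rot : ℤ × ℤ ≃+ ℤ × ℤ where
  toFun q := (q.1 + q.2, -q.1)
  invFun q := (-q.2, q.1 + q.2)
  left_inv q := by ext <;> simp
  right_inv q := by ext <;> simp
  map_add' p q := by ext <;> simp <;> ring

theorem rot_apply (q : ℤ × ℤ) : rot q = (q.1 + q.2, -q.1) := rfl

def rotate (δ : ℤ × ℤ → Fin 3) (q : ℤ × ℤ) : Fin 3 := δ (rot q) + 1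

theorem add_one_ne_iff_fin_three (a : Fin 3) :
    (a + 1 ≠ 2 ↔ a ≠ 1) ∧ (a + 1 ≠ 1 ↔ a ≠ 0) ∧ (a + 1 ≠ 0 ↔ a ≠ 2) := by
  decide +revert

theorem parityU_rotate (δ : ℤ × ℤ → Fin 3) (q : ℤ × ℤ) :
    parityU (rotate δ) q = parityD δ (q.1 + q.2, -q.1 - 1) := by
  simp only [parityU, parityD, rotate, rot_apply, add_one_ne_iff_fin_three]
  ring_nf

theorem parityD_rotate (δ : ℤ × ℤ → Fin 3) (q : ℤ × ℤ) :
    parityD (rotate δ) q = parityU δ (q.1 + q.2 + 1, -q.1 - 1) := by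
  simp only [parityU, parityD, rotate, rot_apply, add_one_ne_iff_fin_three]
  ring_nf

theorem IsEven.rotate {δ : ℤ × ℤ → Fin 3} (hδ : IsEven δ) : IsEven (rotate δ) := fun q =>
  ⟨(parityU_rotate δ q).trans (hδ _).2, (parityD_rotate δ q).trans (hδ _).1⟩

theorem rot_dirVec_succ (d : Fin 3) :
    ∃ s : ℤ, s * s = 1 ∧ rot (dirVec (d + 1)) = s • dirVec d := by
  fin_cases d
  · exact ⟨1, rfl, by simp [rot_apply, dirVec]⟩
  · exact ⟨1, rfl, by simp [rot_apply, dirVec]⟩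
  · exact ⟨-1, rfl, by simp [rot_apply, dirVec]⟩

theorem IsRankTwoGeodesic.rotate {δ : ℤ × ℤ → Fin 3} {d : Fin 3} {q : ℤ × ℤ}
    (h : IsRankTwoGeodesic δ d (rot q)) : IsRankTwoGeodesic (rotate δ) (d + 1) q := by
  obtain ⟨s, -, hs⟩ := rot_dirVec_succ d
  intro n hn
  refine h (n * s) (add_right_cancel (b := 1) ?_)
  rwa [mul_smul, ← hs, ← map_zsmul, ← map_add]

theorem TwoParallelGeodesicsRigid.of_succ {d : Fin 3} (h : TwoParallelGeodesicsRigid (d + 1)) :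
    TwoParallelGeodesicsRigid d := by
  intro δ hδ x₀ y₀ hx hy hdist
  obtain ⟨s, hss, hs⟩ := rot_dirVec_succ d
  have hdist' : ¬ ∃ n : ℤ, rot.symm y₀ = rot.symm x₀ + n • dirVec (d + 1) := by
    rintro ⟨n, hn⟩
    refine hdist ⟨n * s, ?_⟩
    rw [mul_smul, ← hs, ← map_zsmul, ← rot.apply_symm_apply x₀, ← map_add, ← hn,
      rot.apply_symm_apply]
  obtain ⟨hne, hper⟩ := h (rotate δ) hδ.rotate (rot.symm x₀) (rot.symm y₀)
    (.rotate (by rwa [rot.apply_symm_apply])) (.rotate (by rwa [rot.apply_symm_apply])) hdist'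
  refine ⟨fun x hx => hne (rot.symm x) (by simp [rotate, hx]), ?_⟩
  have hper' : Function.Periodic δ (s • dirVec d) := fun x => by
    have := hper (rot.symm x)
    simp only [rotate, map_add, rot.apply_symm_apply, hs] at this
    exact add_right_cancel this
  simpa only [smul_smul, hss, one_smul] using hper'.zsmul s

theorem twoParallelGeodesicsRigid (d : Fin 3) : TwoParallelGeodesicsRigid d := by
  fin_cases d
  · exact twoParallelGeodesicsRigid_zero
  · exact twoParallelGeodesicsRigid_zero.of_succ.of_succ
  · exact twoParallelGeodesicsRigid_zero.of_succ

/-- If an even abstract root distribution admits two distinct parallel rank-2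
geodesic lattice lines in direction `d`, then `δ` never takes the value `d`
and is invariant under translation by `v_d`. -/
theorem even_with_two_parallel_rank_two_geodesics (δ : ℤ × ℤ → Fin 3)
    (heven : ∀ p : ℤ × ℤ, parityU δ p = 0 ∧ parityD δ p = 0) (d : Fin 3)
    (x₀ y₀ : ℤ × ℤ)
    (hx : ∀ n : ℤ, δ (x₀ + n • dirVec d) ≠ d)
    (hy : ∀ n : ℤ, δ (y₀ + n • dirVec d) ≠ d)
    (hdist : ¬ ∃ n : ℤ, y₀ = x₀ + n • dirVec d) :
    (∀ x : ℤ × ℤ, δ x ≠ d) ∧ ∀ x : ℤ × ℤ, δ (x + dirVec d) = δ x :=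
  twoParallelGeodesicsRigid d δ heven x₀ y₀ hx hy hdist
end
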